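/- arXiv:1308.6514 — 2 statements merged into one kernel-verified Lean document; each statement's English description precedes it below -/
import Mathlib

section
/- Let c : X × Ω → ℝ be a normalized Lipschitz cost and π a fixed point of L̂_c^*. Then the support of π is all of X × Ω; in particular π gives positive measure to every set of the form {x₀} × A where A is a nonempty cylinder in Ω. -/
/-!
For continuous `u`, the fixed-point identity iterates to `∫ u dπ = ∫ L̂_c^{n+1} u dπ`. Let `u` be
the indicator of a clopen set containing `{x₀} × [s]` with `|s| = n`, and `m` a lower bound of
`c` (which is continuous on a compact space). Following the word `s` above `x₀` costs at most
`e^{n m}` in the first `n` steps, and the outermost step may start from any point of `X × Ω`;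
so `L̂_c^{n+1} u ≥ e^{(n+1) m}` everywhere and the set has positive measure. The `σ`-algebra on
`X` is arbitrary, so `{x₀}` is replaced by its measurable atom, which gives `{x₀} × [s]` the same
(outer) measure.
-/

open MeasureTheory Filter Topology

attribute [local instance] PiNat.dist

/-- The Bernoulli space `{1,...,d}^ℕ`, with the metric `dist z y = (1/2)^n` where `n`
is the first coordinate at which `z` and `y` differ (provided by `PiNat.dist`). -/
abbrev W (d : ℕ) : Type := ℕ → Fin d

/-- The shift map `σ` on the Bernoulli space. -/
def shift {d : ℕ} (y : W d) : W d := fun n => y (n + 1)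

/-- Prepend the symbol `a` to the sequence `y`, i.e. the point `a y` (a preimage of `y`
under the shift). -/
def cons {d : ℕ} (a : Fin d) (y : W d) : W d := fun n =>
  match n with
  | 0 => a
  | Nat.succ k => y k

variable {X : Type*} [Fintype X] [MeasurableSpace X] [TopologicalSpace X] {d : ℕ}

/-- `π ∈ Π(·,σ)`: a Borel probability on `X × Ω` whose `y`-marginal is `σ`-invariant. -/
def IsPlan (π : Measure (X × W d)) : Prop :=
  IsProbabilityMeasure π ∧
    ∀ g : W d → ℝ, Continuous g → ∫ p, g (shift p.2) ∂π = ∫ p, g p.2 ∂π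

/-- A cost `c` is normalized if `∑_{x ∈ X} ∑_{σ w = y} e^{c(x,w)} = 1` for every `y`. -/
def IsNormalized (c : X × W d → ℝ) : Prop :=
  ∀ y : W d, ∑ x : X, ∑ a : Fin d, Real.exp (c (x, cons a y)) = 1

/-- `π` is a fixed point of the dual transfer operator `L̂_c^*`, i.e. a Gibbs plan for `c`. -/
def GibbsFixed (c : X × W d → ℝ) (π : Measure (X × W d)) : Prop :=
  ∀ u : X × W d → ℝ, Continuous u →
    ∫ p, u p ∂π =
      ∫ p, ∑ x : X, ∑ a : Fin d,
        Real.exp (c (x, cons a p.2)) * u (x, cons a p.2) ∂π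

/-- `c` is a Lipschitz cost: Lipschitz in the `Ω` variable, uniformly in `x ∈ X`. -/
def LipCost (c : X × W d → ℝ) : Prop :=
  ∃ K : ℝ, ∀ (x : X) (y z : W d), |c (x, y) - c (x, z)| ≤ K * dist y z

/-- The entropy of a plan: `H(π) = inf { -∫ b dπ : b normalized }`. -/
noncomputable def Hent (π : Measure (X × W d)) : ℝ :=
  sInf {r | ∃ b : X × W d → ℝ, LipCost b ∧ IsNormalized b ∧ r = -∫ p, b p ∂π}

/-- The pressure `P(c) = sup_{π ∈ Π(·,σ)} ∫ c dπ + H(π)`. -/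
noncomputable def Pr (c : X × W d → ℝ) : ℝ :=
  sSup {r | ∃ π : Measure (X × W d), IsPlan π ∧ r = ∫ p, c p ∂π + Hent π}

/-- The cylinder in `Ω` determined by a finite word `s`. -/
def cylOf {d : ℕ} (s : List (Fin d)) : Set (W d) :=
  {y | ∀ i, (h : i < s.length) → y i = s.get ⟨i, h⟩}

lemma cylOf_eq_iInter (s : List (Fin d)) :
    cylOf s = ⋂ i : Fin s.length, (fun y : W d => y i) ⁻¹' {s.get i} := by
  ext y
  simp only [cylOf, Set.mem_ofPred_eq, Set.mem_iInter, Set.mem_preimage, Set.mem_singleton_iff]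
  exact ⟨fun h i => h i i.2, fun h i hi => h ⟨i, hi⟩⟩

lemma isClopen_cylOf (s : List (Fin d)) : IsClopen (cylOf s) := by
  rw [cylOf_eq_iInter]
  exact isClopen_iInter_of_finite fun i => (isClopen_discrete _).preimage (continuous_apply _)

lemma append_mem_cylOf (s : List (Fin d)) (y : W d) : s ++ₛ y ∈ cylOf s :=
  fun i hi => Stream'.get_append_left i s y hi

lemma exists_cylOf_subset {U : Set (W d)} (hU : IsOpen U) {y : W d} (hy : y ∈ U) :
    ∃ s : List (Fin d), cylOf s ⊆ U := by
  obtain ⟨_, ⟨z, n, rfl⟩, hyz, hzU⟩ :=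
    (PiNat.isTopologicalBasis_cylinders _).exists_subset_of_mem_open hy hU
  refine ⟨List.ofFn fun i : Fin n => y i, fun w hw => hzU ?_⟩
  rw [← PiNat.mem_cylinder_iff_eq.1 hyz]
  intro i hi
  simpa using hw i (by simpa using hi)

lemma measure_measurableAtom_prod {α β : Type*} [MeasurableSpace α] [MeasurableSpace β]
    (μ : Measure (α × β)) (x : α) (A : Set β) :
    μ (measurableAtom x ×ˢ A) = μ ({x} ×ˢ A) := by
  refine le_antisymm ?_ (measure_mono (Set.prod_mono (by simp) le_rfl))
  rw [measure_eq_iInf ({x} ×ˢ A)]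
  refine le_iInf fun T => le_iInf fun hsub => le_iInf fun hT => measure_mono ?_
  rintro ⟨x', y⟩ ⟨hx', hy⟩
  exact mem_of_mem_measurableAtom hx' (measurable_prodMk_right hT) (hsub ⟨rfl, hy⟩)

lemma continuous_cons (a : Fin d) : Continuous (cons a : W d → W d) := by
  refine continuous_pi fun n => ?_
  cases n with
  | zero => exact continuous_const
  | succ k => exact continuous_apply k

section Transfer

variable {X : Type*} {c v : X × W d → ℝ}

lemma continuous_transfer_summand [TopologicalSpace X] (hc : Continuous c) (hv : Continuous v)
    (x : X) (a : Fin d) :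
    Continuous fun y : W d => Real.exp (c (x, cons a y)) * v (x, cons a y) := by
  have hmap : Continuous fun y : W d => ((x, cons a y) : X × W d) :=
    continuous_const.prodMk (continuous_cons a)
  exact (Real.continuous_exp.comp (hc.comp hmap)).mul (hv.comp hmap)

variable [Fintype X]

/-- The transfer operator `L̂_c`; `GibbsFixed c π` reads `∫ u ∂π = ∫ transfer c u ∂π`. -/
noncomputable def transfer (c v : X × W d → ℝ) (p : X × W d) : ℝ :=
  ∑ x : X, ∑ a : Fin d, Real.exp (c (x, cons a p.2)) * v (x, cons a p.2)

lemma transfer_nonneg (hv : 0 ≤ v) : 0 ≤ transfer c v := fun _ =>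
  Finset.sum_nonneg fun _ _ => Finset.sum_nonneg fun _ _ => mul_nonneg (Real.exp_nonneg _) (hv _)

lemma transfer_iterate_nonneg (hv : 0 ≤ v) (n : ℕ) : 0 ≤ (transfer c)^[n] v :=
  Function.Iterate.rec (fun w => 0 ≤ w) hv (fun _ => transfer_nonneg) n

lemma exp_mul_le_transfer {m : ℝ} (hm : ∀ p, m ≤ c p) (hv : 0 ≤ v) (x₀ : X) (a : Fin d)
    (p : X × W d) : Real.exp m * v (x₀, cons a p.2) ≤ transfer c v p := by
  have hterm : ∀ x b, 0 ≤ Real.exp (c (x, cons b p.2)) * v (x, cons b p.2) :=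
    fun _ _ => mul_nonneg (Real.exp_nonneg _) (hv _)
  calc Real.exp m * v (x₀, cons a p.2)
      ≤ Real.exp (c (x₀, cons a p.2)) * v (x₀, cons a p.2) := by gcongr; exacts [hv _, hm _]
    _ ≤ ∑ b : Fin d, Real.exp (c (x₀, cons b p.2)) * v (x₀, cons b p.2) :=
        Finset.single_le_sum (fun b _ => hterm x₀ b) (Finset.mem_univ a)
    _ ≤ transfer c v p :=
        Finset.single_le_sum (f := fun x => ∑ b : Fin d, _)
          (fun x _ => Finset.sum_nonneg fun b _ => hterm x b) (Finset.mem_univ x₀)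

lemma exp_mul_le_transfer_iterate {m : ℝ} (hm : ∀ p, m ≤ c p) (x₀ : X) :
    ∀ (s : List (Fin d)) {v : X × W d → ℝ}, 0 ≤ v → ∀ y : W d,
      Real.exp (m * s.length) * v (x₀, s ++ₛ y) ≤ (transfer c)^[s.length] v (x₀, y)
  | [], v, _, y => by
    simp only [List.length_nil, Nat.cast_zero, mul_zero, Real.exp_zero, one_mul]; exact le_rfl
  | a :: s, v, hv, y =>
    calc Real.exp (m * (a :: s).length) * v (x₀, (a :: s) ++ₛ y)
        = Real.exp (m * s.length) * (Real.exp m * v (x₀, cons a (s ++ₛ y))) := by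
          rw [List.length_cons, Nat.cast_succ, mul_add_one, Real.exp_add, mul_assoc]; rfl
      _ ≤ Real.exp (m * s.length) * transfer c v (x₀, s ++ₛ y) := by
          gcongr; exact exp_mul_le_transfer hm hv x₀ a (x₀, s ++ₛ y)
      _ ≤ (transfer c)^[s.length] (transfer c v) (x₀, y) :=
          exp_mul_le_transfer_iterate hm x₀ s (transfer_nonneg hv) y
      _ = (transfer c)^[(a :: s).length] v (x₀, y) := by
          rw [List.length_cons, Function.iterate_succ_apply]

lemma exp_mul_le_transfer_iterate_succ {m : ℝ} (hm : ∀ p, m ≤ c p) (hv : 0 ≤ v) (x₀ : X)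
    (a : Fin d) (s : List (Fin d)) (p : X × W d) :
    Real.exp (m * (s.length + 1)) * v (x₀, s ++ₛ cons a p.2)
      ≤ (transfer c)^[s.length + 1] v p := by
  calc Real.exp (m * (s.length + 1)) * v (x₀, s ++ₛ cons a p.2)
      = Real.exp m * (Real.exp (m * s.length) * v (x₀, s ++ₛ cons a p.2)) := by
        rw [mul_add_one, Real.exp_add]; ring
    _ ≤ Real.exp m * (transfer c)^[s.length] v (x₀, cons a p.2) := by
        gcongr; exact exp_mul_le_transfer_iterate hm x₀ s hv _
    _ ≤ transfer c ((transfer c)^[s.length] v) p :=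
        exp_mul_le_transfer hm (transfer_iterate_nonneg hv _) x₀ a p
    _ = (transfer c)^[s.length + 1] v p := by rw [Function.iterate_succ_apply']

variable [TopologicalSpace X]

lemma continuous_transfer (hc : Continuous c) (hv : Continuous v) :
    Continuous (transfer c v) :=
  continuous_finsetSum _ fun x _ => continuous_finsetSum _ fun a _ =>
    (continuous_transfer_summand hc hv x a).comp continuous_snd

lemma continuous_transfer_iterate (hc : Continuous c) (hv : Continuous v) (n : ℕ) :
    Continuous ((transfer c)^[n] v) :=
  Function.Iterate.rec (fun w => Continuous w) hv (fun _ hw => continuous_transfer hc hw) n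

variable [MeasurableSpace X]

lemma measurable_transfer (hc : Continuous c) (hv : Continuous v) : Measurable (transfer c v) :=
  Finset.measurable_sum _ fun x _ => Finset.measurable_sum _ fun a _ =>
    (continuous_transfer_summand hc hv x a).measurable.comp measurable_snd

lemma integrable_transfer (π : Measure (X × W d)) [IsFiniteMeasure π] (hc : Continuous c)
    (hv : Continuous v) : Integrable (transfer c v) π := by
  obtain ⟨C, hC⟩ := (isCompact_range (continuous_transfer hc hv)).isBounded.exists_norm_le
  exact .of_bound (measurable_transfer hc hv).aestronglyMeasurable C
    (ae_of_all _ fun p => hC _ ⟨p, rfl⟩)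

end Transfer

section Gibbs

variable {X : Type*} [Fintype X] [MeasurableSpace X] [TopologicalSpace X]
  {c : X × W d → ℝ} {π : Measure (X × W d)}

lemma GibbsFixed.integral_transfer_iterate (hπ : GibbsFixed c π) (hc : Continuous c)
    {u : X × W d → ℝ} (hu : Continuous u) (n : ℕ) :
    ∫ p, (transfer c)^[n] u p ∂π = ∫ p, u p ∂π := by
  induction n with
  | zero => rfl
  | succ n ih =>
    rw [Function.iterate_succ_apply', ← ih]
    exact (hπ _ (continuous_transfer_iterate hc hu n)).symm

theorem GibbsFixed.measure_pos_of_isClopen [IsFiniteMeasure π] [NeZero π]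
    (hπ : GibbsFixed c π) (hc : Continuous c) {S : Set (X × W d)} (hSm : MeasurableSet S)
    (hS : IsClopen S) (hne : S.Nonempty) : 0 < π S := by
  obtain ⟨⟨x₀, y⟩, hy⟩ := hne
  obtain ⟨s, hs⟩ := exists_cylOf_subset (hS.isOpen.preimage (Continuous.prodMk_right x₀)) hy
  obtain ⟨m, hm⟩ := (isCompact_range hc).bddBelow
  set u : X × W d → ℝ := S.indicator 1
  have hu : Continuous u := hS.continuous_indicator continuous_const
  have hu0 : 0 ≤ u := Set.indicator_nonneg fun _ _ => zero_le_one
  have hbound (p : X × W d) :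
      Real.exp (m * (s.length + 1)) ≤ (transfer c)^[s.length + 1] u p := by
    have h1 : u (x₀, s ++ₛ cons (y 0) p.2) = 1 :=
      Set.indicator_of_mem (hs (append_mem_cylOf s _)) 1
    simpa [h1] using
      exp_mul_le_transfer_iterate_succ (fun p => hm ⟨p, rfl⟩) hu0 x₀ (y 0) s p
  have hint : Integrable ((transfer c)^[s.length + 1] u) π := by
    rw [Function.iterate_succ']
    exact integrable_transfer π hc (continuous_transfer_iterate hc hu _)
  have hpos : 0 < π.real S := calc
    0 < π.real Set.univ * Real.exp (m * (s.length + 1)) :=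
      mul_pos measureReal_univ_pos (Real.exp_pos _)
    _ = ∫ _, Real.exp (m * (s.length + 1)) ∂π := by rw [integral_const, smul_eq_mul]
    _ ≤ ∫ p, (transfer c)^[s.length + 1] u p ∂π := integral_mono (integrable_const _) hint hbound
    _ = π.real S := by rw [hπ.integral_transfer_iterate hc hu, integral_indicator_one hSm]
  exact (ENNReal.toReal_pos_iff.1 hpos).1

end Gibbs

theorem gibbs_plan_full_support_general
    [DiscreteTopology X]
    (c : X × W d → ℝ) (hc : Continuous c)
    (pl : Measure (X × W d)) (hpl : IsProbabilityMeasure pl)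
    (hfix : GibbsFixed c pl) :
    (∀ (x₀ : X) (s : List (Fin d)), 0 < pl ({x₀} ×ˢ cylOf s)) ∧
      ∀ U : Set (X × W d), IsOpen U → U.Nonempty → 0 < pl U := by
  obtain ⟨-, z⟩ := nonempty_of_isProbabilityMeasure pl
  have hcyl (x₀ : X) (s : List (Fin d)) : 0 < pl ({x₀} ×ˢ cylOf s) := by
    rw [← measure_measurableAtom_prod]
    exact hfix.measure_pos_of_isClopen hc
      ((MeasurableSet.measurableAtom_of_countable x₀).prod (isClopen_cylOf s).isOpen.measurableSet)
      ((isClopen_discrete _).prod (isClopen_cylOf s))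
      ⟨(x₀, s ++ₛ z), mem_measurableAtom_self x₀, append_mem_cylOf s z⟩
  refine ⟨hcyl, fun U hU ⟨⟨x₀, y⟩, hy⟩ => ?_⟩
  obtain ⟨s, hs⟩ := exists_cylOf_subset (hU.preimage (Continuous.prodMk_right x₀)) hy
  refine (hcyl x₀ s).trans_le (measure_mono ?_)
  rintro ⟨x, w⟩ ⟨rfl, hw⟩
  exact hs hw

/-- A fixed point `pl` of `L̂_c^*` for a normalized Lipschitz cost has full support:
it gives positive measure to every set `{x₀} × A` with `A` a (nonempty) cylinder, and
more generally to every nonempty open set. -/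
theorem gibbs_plan_full_support
    [Nonempty X] [DiscreteTopology X]
    (c : X × W d → ℝ) (hc : Continuous c) (hlip : LipCost c) (hnorm : IsNormalized c)
    (pl : Measure (X × W d)) (hpl : IsProbabilityMeasure pl)
    (hfix : GibbsFixed c pl) :
    (∀ (x₀ : X) (s : List (Fin d)), 0 < pl ({x₀} ×ˢ cylOf s)) ∧
      ∀ U : Set (X × W d), IsOpen U → U.Nonempty → 0 < pl U :=
  gibbs_plan_full_support_general c hc pl hpl hfix
end

section
/- Let π ∈ Π(·,σ) have x-marginal μ ∈ P(X) and y-marginal the σ-invariant measure ν. Then H(π) ≤ h(μ) + h(ν), where h(μ) = −∑_{x} μ(x) log μ(x) and h(ν) is the Kolmogorov–Sinai entropy of ν. -/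
open MeasureTheory Filter Topology

attribute [local instance] PiNat.dist

variable {X : Type*} [Fintype X] [MeasurableSpace X] [TopologicalSpace X] {d : ℕ}

/-!
For a Lipschitz `g` on `W d` normalized along the shift and a strictly positive probability
vector `p` on `X`, the potential `(x, y) ↦ g y + log (p x)` is normalized, hence
`H(π) ≤ -∑ μ(x) log p(x) - ∫ g dν`. The cross entropy `-∑ μ log p` can be made arbitrarily close
to `h(μ)` by mixing `μ` with a little of the uniform distribution (a positive `p` is needed,
as `μ` may vanish somewhere); taking the infimum over `g` gives `h(ν)`.
-/

open Real

lemma exists_pos_sum_eq_one_neg_sum_mul_log_le {ι : Type*} [Fintype ι] [Nonempty ι]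
    {w : ι → ℝ} (hw0 : ∀ i, 0 ≤ w i) (hw1 : ∑ i, w i = 1) {δ : ℝ} (hδ : 0 < δ) :
    ∃ p : ι → ℝ, (∀ i, 0 < p i) ∧ ∑ i, p i = 1 ∧
      -∑ i, w i * log (p i) ≤ -∑ i, w i * log (w i) + δ := by
  -- `p i ≥ exp (-δ) * w i`, so each term of the cross entropy grows by at most `δ * w i`
  set t := exp (-δ)
  have ht1 : t < 1 := exp_lt_one_iff.2 (neg_neg_of_pos hδ)
  have hcard : (0 : ℝ) < Fintype.card ι := by exact_mod_cast Fintype.card_pos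
  have hunif : 0 < (1 - t) / Fintype.card ι := div_pos (sub_pos.2 ht1) hcard
  refine ⟨fun i => t * w i + (1 - t) / Fintype.card ι, fun i => ?_, ?_, ?_⟩
  · exact add_pos_of_nonneg_of_pos (mul_nonneg (exp_pos _).le (hw0 i)) hunif
  · rw [Finset.sum_add_distrib, ← Finset.mul_sum, hw1, Finset.sum_const, Finset.card_univ,
      nsmul_eq_mul]
    field_simp
    ring
  · have hterm : ∀ i,
        w i * log (w i) - δ * w i ≤ w i * log (t * w i + (1 - t) / Fintype.card ι) := by
      intro i
      rcases (hw0 i).eq_or_lt with hwi | hwi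
      · simp [← hwi]
      · calc w i * log (w i) - δ * w i = w i * log (t * w i) := by
              rw [log_mul (exp_pos _).ne' hwi.ne', log_exp]; ring
          _ ≤ _ := by
              gcongr
              linarith
    have hsum := Finset.sum_le_sum fun i (_ : i ∈ Finset.univ) => hterm i
    rw [Finset.sum_sub_distrib, ← Finset.mul_sum, hw1] at hsum
    linarith

section

variable {X : Type*}

lemma cons_shift (w : W d) : cons (w 0) (shift w) = w := by
  funext n; cases n <;> rfl

lemma continuous_of_abs_sub_le_mul_dist {g : W d → ℝ} {K : ℝ}
    (hg : ∀ y z, |g y - g z| ≤ K * dist y z) : Continuous g :=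
  -- `PiNat.metricSpace` carries the product topology, definitionally
  let _ : MetricSpace (W d) := PiNat.metricSpace
  (LipschitzWith.of_dist_le_mul (K := K.toNNReal) fun y z =>
    (hg y z).trans (mul_le_mul_of_nonneg_right (Real.le_coe_toNNReal K)
      (PiNat.dist_nonneg y z))).continuous

lemma IsNormalized.le_zero [Fintype X] {c : X × W d → ℝ} (hc : IsNormalized c)
    (q : X × W d) : c q ≤ 0 := by
  rw [← exp_le_one_iff, ← hc (shift q.2)]
  calc exp (c q) = exp (c (q.1, cons (q.2 0) (shift q.2))) := by rw [cons_shift]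
    _ ≤ ∑ a, exp (c (q.1, cons a (shift q.2))) :=
        Finset.single_le_sum (f := fun a => exp (c (q.1, cons a (shift q.2))))
          (fun a _ => (exp_pos _).le) (Finset.mem_univ _)
    _ ≤ ∑ x, ∑ a, exp (c (x, cons a (shift q.2))) :=
        Finset.single_le_sum (f := fun x => ∑ a, exp (c (x, cons a (shift q.2))))
          (fun x _ => Finset.sum_nonneg fun a _ => (exp_pos _).le) (Finset.mem_univ _)

lemma Hent_le_neg_integral [Fintype X] [MeasurableSpace X] {pl : Measure (X × W d)}
    {b : X × W d → ℝ} (hLip : LipCost b) (hb : IsNormalized b) : Hent pl ≤ -∫ q, b q ∂pl := by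
  refine csInf_le ⟨0, ?_⟩ ⟨b, hLip, hb, rfl⟩
  rintro _ ⟨b', -, hb', rfl⟩
  exact neg_nonneg.2 (integral_nonpos hb'.le_zero)

variable {g : W d → ℝ} {f : X → ℝ}

lemma lipCost_add_comp_fst {K : ℝ} (hg : ∀ y z, |g y - g z| ≤ K * dist y z) :
    LipCost fun q : X × W d => g q.2 + f q.1 :=
  ⟨K, fun x y z => by simpa using hg y z⟩

lemma isNormalized_add_log_comp_fst [Fintype X] (hg : ∀ y, ∑ a, exp (g (cons a y)) = 1)
    {p : X → ℝ} (hp : ∀ x, 0 < p x) (hp1 : ∑ x, p x = 1) :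
    IsNormalized fun q : X × W d => g q.2 + log (p q.1) := by
  intro y
  simp only [exp_add, exp_log (hp _), ← Finset.sum_mul, hg, one_mul, hp1]

lemma integral_add_comp_fst [Fintype X] [MeasurableSpace X] [MeasurableSingletonClass X]
    (pl : Measure (X × W d)) [IsFiniteMeasure pl] (hg : Continuous g) :
    ∫ q, g q.2 + f q.1 ∂pl =
      ∫ y, g y ∂pl.map Prod.snd + ∑ x, (pl.map Prod.fst).real {x} * f x := by
  have hgν : Integrable g (pl.map Prod.snd) :=
    (BoundedContinuousFunction.mkOfCompact ⟨g, hg⟩).integrable _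
  have hfμ : Integrable f (pl.map Prod.fst) := .of_finite
  have hg_snd : Integrable (fun q : X × W d => g q.2) pl :=
    (integrable_map_measure hgν.aestronglyMeasurable measurable_snd.aemeasurable).1 hgν
  have hf_fst : Integrable (fun q : X × W d => f q.1) pl :=
    (integrable_map_measure hfμ.aestronglyMeasurable measurable_fst.aemeasurable).1 hfμ
  rw [integral_add hg_snd hf_fst,
    integral_map measurable_snd.aemeasurable hgν.aestronglyMeasurable,
    ← integral_map measurable_fst.aemeasurable hfμ.aestronglyMeasurable, integral_fintype hfμ]
  simp only [smul_eq_mul]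

lemma Hent_le_neg_sum_mul_log_sub_integral [Fintype X] [Nonempty X]
    [MeasurableSpace X] [MeasurableSingletonClass X] (pl : Measure (X × W d))
    [IsProbabilityMeasure pl] {g : W d → ℝ} {K : ℝ} (hK : ∀ y z, |g y - g z| ≤ K * dist y z)
    (hg : ∀ y, ∑ a, exp (g (cons a y)) = 1) :
    Hent pl ≤ -∑ x, (pl.map Prod.fst).real {x} * log ((pl.map Prod.fst).real {x})
      - ∫ y, g y ∂pl.map Prod.snd := by
  set μ := pl.map Prod.fst
  have : IsProbabilityMeasure μ := Measure.isProbabilityMeasure_map measurable_fst.aemeasurable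
  refine le_of_forall_pos_le_add fun δ hδ => ?_
  obtain ⟨p, hp, hp1, hpμ⟩ := exists_pos_sum_eq_one_neg_sum_mul_log_le
    (w := fun x => μ.real {x}) (fun _ => measureReal_nonneg) (by simp) hδ
  calc Hent pl ≤ -∫ q, g q.2 + log (p q.1) ∂pl :=
        Hent_le_neg_integral (lipCost_add_comp_fst (f := fun x => log (p x)) hK)
          (isNormalized_add_log_comp_fst hg hp hp1)
    _ = -∑ x, μ.real {x} * log (p x) - ∫ y, g y ∂pl.map Prod.snd := by
        rw [integral_add_comp_fst (f := fun x => log (p x)) pl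
          (continuous_of_abs_sub_le_mul_dist hK)]
        ring
    _ ≤ _ := by linarith

end

theorem entropy_le_sum_of_marginal_entropies_general
    [Nonempty X] [MeasurableSingletonClass X] (hd : 0 < d)
    (pl : Measure (X × W d)) (hpl : IsPlan pl)
    (hKS : ℝ)
    (hKSdef : hKS = sInf {r | ∃ g : W d → ℝ,
      (∃ K : ℝ, ∀ y z : W d, |g y - g z| ≤ K * dist y z) ∧
      (∀ y : W d, ∑ a : Fin d, Real.exp (g (cons a y)) = 1) ∧
      r = -∫ y, g y ∂(pl.map Prod.snd)}) :
    Hent pl ≤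
      (-∑ x : X, ((pl.map Prod.fst) {x}).toReal * Real.log (((pl.map Prod.fst) {x}).toReal))
        + hKS := by
  have := hpl.1
  rw [hKSdef, ← sub_le_iff_le_add']
  refine le_csInf ⟨_, fun _ => -log d, ⟨0, by simp⟩, fun y => ?_, rfl⟩ ?_
  · simp [exp_neg, exp_log (Nat.cast_pos.2 hd), hd.ne']
  · rintro _ ⟨g, ⟨K, hK⟩, hg, rfl⟩
    have key := Hent_le_neg_sum_mul_log_sub_integral pl hK hg
    simp only [measureReal_def] at key
    linarith

/-- If `pl ∈ Π(·,σ)` has `x`-marginal `μ` and `y`-marginal `ν`, then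
`H(pl) ≤ h(μ) + h(ν)`, where `h(μ) = −∑_x μ(x) log μ(x)` and `h(ν)` is the
Kolmogorov–Sinai entropy of `ν`, characterized as
`h(ν) = inf { −∫ g dν : g Lipschitz, ∑_{σ w = y} e^{g(w)} = 1 ∀ y }`. -/
theorem entropy_le_sum_of_marginal_entropies
    [Nonempty X] [DiscreteTopology X] [MeasurableSingletonClass X] (hd : 0 < d)
    (pl : Measure (X × W d)) (hpl : IsPlan pl)
    (hKS : ℝ)
    (hKSdef : hKS = sInf {r | ∃ g : W d → ℝ,
      (∃ K : ℝ, ∀ y z : W d, |g y - g z| ≤ K * dist y z) ∧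
      (∀ y : W d, ∑ a : Fin d, Real.exp (g (cons a y)) = 1) ∧
      r = -∫ y, g y ∂(pl.map Prod.snd)}) :
    Hent pl ≤
      (-∑ x : X, ((pl.map Prod.fst) {x}).toReal * Real.log (((pl.map Prod.fst) {x}).toReal))
        + hKS :=
  entropy_le_sum_of_marginal_entropies_general hd pl hpl hKS hKSdef
end
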